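/- Reflection symmetry of NLS Lax pair solutions for even potentials: Let q: ℝ×ℝ → ℂ be smooth with q(t, −x) = q(t, x) for all (t,x), let λ ∈ ℂ, and let φ = (φ₁, φ₂): ℝ×ℝ → ℂ² be a smooth solution of the NLS Lax pair at (q, λ). Then the function χ(t,x) = ( conj(φ₂(t, −x)), conj(φ₁(t, −x)) ) is a solution of the NLS Lax pair at (q, −conj(λ)). -/

import Mathlib

open Matrix

noncomputable section

/-- The Pauli matrix `σ₃ = diag(1, −1)`. -/
def sigma3 : Matrix (Fin 2) (Fin 2) ℂ := !![1, 0; 0, -1]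

/-- The matrix `U = [[0, iq],[i·conj(q), 0]]` of the NLS Lax pair. -/
def Umat (q : ℝ → ℝ → ℂ) (t x : ℝ) : Matrix (Fin 2) (Fin 2) ℂ :=
  !![0, Complex.I * q t x; Complex.I * (starRingEnd ℂ) (q t x), 0]

/-- The matrix `V = −i|q|²σ₃ + [[0, ∂_x q],[−∂_x conj(q), 0]]` of the NLS Lax pair. -/
def Vmat (q : ℝ → ℝ → ℂ) (t x : ℝ) : Matrix (Fin 2) (Fin 2) ℂ :=
  (-(Complex.I * (Complex.normSq (q t x) : ℂ))) • sigma3 +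
    !![0, deriv (fun y => q t y) x;
       -(deriv (fun y => (starRingEnd ℂ) (q t y)) x), 0]

/-- `φ` solves the NLS Lax pair at `(q, λ)`:
`∂_x φ = (iλσ₃ + U)φ` and `∂_t φ = −(2iλ²σ₃ + 2λU + V)φ`. -/
def NLSLaxSol (q : ℝ → ℝ → ℂ) (lam : ℂ) (φ : ℝ → ℝ → Fin 2 → ℂ) : Prop :=
  (∀ t x, deriv (fun y => φ t y) x =
    ((Complex.I * lam) • sigma3 + Umat q t x).mulVec (φ t x)) ∧
  (∀ t x, deriv (fun s => φ s x) t =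
    (-((2 * Complex.I * lam ^ 2) • sigma3 + (2 * lam) • Umat q t x + Vmat q t x)).mulVec
      (φ t x))


set_option maxRecDepth 10000

/-- Chain rule pattern: conjugate-reflect a complex function of a real variable. -/
lemma hasDerivAt_conj_neg {f : ℝ → ℂ} {d : ℂ} {x : ℝ} (h : HasDerivAt f d (-x)) :
    HasDerivAt (fun y => (starRingEnd ℂ) (f (-y))) (-((starRingEnd ℂ) d)) x := by
  have h1 : HasDerivAt (fun y : ℝ => f (-y)) ((-1 : ℝ) • d) x :=
    h.scomp x (hasDerivAt_neg' x)
  have h2 : HasDerivAt (fun y => star (f (-y))) (star ((-1 : ℝ) • d)) x := h1.star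
  have he : star ((-1 : ℝ) • d) = -((starRingEnd ℂ) d) := by
    rw [star_smul, starRingEnd_apply]; simp
  rw [he] at h2
  exact h2

set_option maxRecDepth 10000 in
set_option maxHeartbeats 1000000 in
/-- **Reflection symmetry of NLS Lax pair solutions for even potentials.**
If `q(t,−x) = q(t,x)` and `φ = (φ₁, φ₂)` solves the NLS Lax pair at `(q, λ)`, then
`χ(t,x) = (conj(φ₂(t,−x)), conj(φ₁(t,−x)))` solves the NLS Lax pair at `(q, −conj(λ))`. -/
theorem nls_lax_reflection_symmetry
    (q : ℝ → ℝ → ℂ) (hq : ContDiff ℝ (⊤ : ℕ∞) (fun p : ℝ × ℝ => q p.1 p.2))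
    (hq_even : ∀ t x, q t (-x) = q t x)
    (lam : ℂ)
    (φ : ℝ → ℝ → Fin 2 → ℂ)
    (hφ_smooth : ContDiff ℝ (⊤ : ℕ∞) (fun p : ℝ × ℝ => φ p.1 p.2))
    (hφ : NLSLaxSol q lam φ) :
    NLSLaxSol q (-(starRingEnd ℂ) lam)
      (fun t x => ![(starRingEnd ℂ) (φ t (-x) 1), (starRingEnd ℂ) (φ t (-x) 0)]) := by
  have hφd : Differentiable ℝ (fun p : ℝ × ℝ => φ p.1 p.2) := hφ_smooth.differentiable (by simp)
  have hqd : Differentiable ℝ (fun p : ℝ × ℝ => q p.1 p.2) := hq.differentiable (by simp)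
  have hφx : ∀ t x, DifferentiableAt ℝ (fun y => φ t y) x := fun t x =>
    (hφd (t, x)).comp x ((differentiableAt_const t).prodMk differentiableAt_id)
  have hφt : ∀ t x, DifferentiableAt ℝ (fun s => φ s x) t := fun t x =>
    by have h := (hφd (t, x)).comp t ((differentiableAt_id (𝕜 := ℝ) (x := t)).prodMk (differentiableAt_const x)); exact h
  have hqx : ∀ t x, DifferentiableAt ℝ (fun y => q t y) x := fun t x =>
    (hqd (t, x)).comp x ((differentiableAt_const t).prodMk differentiableAt_id)
  -- derivative of q in x is odd
  have hq_odd : ∀ t x, deriv (fun y => q t y) (-x) = -deriv (fun y => q t y) x := by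
    intro t x
    have h1 : HasDerivAt (fun y => q t y) (deriv (fun y => q t y) (-x)) (-x) :=
      (hqx t (-x)).hasDerivAt
    have h2 : HasDerivAt (fun y : ℝ => q t (-y)) ((-1 : ℝ) • deriv (fun y => q t y) (-x)) x :=
      h1.scomp x (hasDerivAt_neg' x)
    have h3 : HasDerivAt (fun y => q t y) ((-1 : ℝ) • deriv (fun y => q t y) (-x)) x := by
      have he : (fun y : ℝ => q t (-y)) = fun y => q t y := funext fun y => hq_even t y
      rwa [he] at h2
    have h4 := h3.deriv
    rw [h4]; simp
  -- derivative of conj q in x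
  have hq_conj_deriv : ∀ t x, deriv (fun y => (starRingEnd ℂ) (q t y)) x
      = (starRingEnd ℂ) (deriv (fun y => q t y) x) := by
    intro t x
    have h1 : HasDerivAt (fun y => star (q t y)) (star (deriv (fun y => q t y) x)) x :=
      ((hqx t x).hasDerivAt).star
    exact h1.deriv
  have hxD : ∀ t x, HasDerivAt (fun y => φ t y)
      (((Complex.I * lam) • sigma3 + Umat q t x).mulVec (φ t x)) x := fun t x => by
    have h := (hφx t x).hasDerivAt
    rwa [hφ.1 t x] at h
  have htD : ∀ t x, HasDerivAt (fun s => φ s x)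
      ((-((2 * Complex.I * lam ^ 2) • sigma3 + (2 * lam) • Umat q t x
        + Vmat q t x)).mulVec (φ t x)) t := fun t x => by
    have h := (hφt t x).hasDerivAt
    rwa [hφ.2 t x] at h
  constructor
  · intro t x
    have hc : ∀ i, HasDerivAt (fun y => φ t y i)
        ((((Complex.I * lam) • sigma3 + Umat q t (-x)).mulVec (φ t (-x))) i) (-x) :=
      hasDerivAt_pi.mp (hxD t (-x))
    have h0 := hasDerivAt_conj_neg (hc 1)
    have h1 := hasDerivAt_conj_neg (hc 0)
    have hχ : HasDerivAt
        (fun y => (![(starRingEnd ℂ) (φ t (-y) 1), (starRingEnd ℂ) (φ t (-y) 0)] : Fin 2 → ℂ))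
        (![-((starRingEnd ℂ) ((((Complex.I * lam) • sigma3 + Umat q t (-x)).mulVec (φ t (-x))) 1)),
           -((starRingEnd ℂ) ((((Complex.I * lam) • sigma3 + Umat q t (-x)).mulVec (φ t (-x))) 0))]) x := by
      apply hasDerivAt_pi.mpr
      intro i
      fin_cases i
      · simpa using h0
      · simpa using h1
    have hvec : ((Complex.I * -(starRingEnd ℂ) lam) • sigma3 + Umat q t x).mulVec
          (![(starRingEnd ℂ) (φ t (-x) 1), (starRingEnd ℂ) (φ t (-x) 0)])
        = (![-((starRingEnd ℂ) ((((Complex.I * lam) • sigma3 + Umat q t (-x)).mulVec (φ t (-x))) 1)),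
             -((starRingEnd ℂ) ((((Complex.I * lam) • sigma3 + Umat q t (-x)).mulVec (φ t (-x))) 0))] : Fin 2 → ℂ) := by
      funext i
      fin_cases i <;>
        simp [Matrix.mulVec, dotProduct, Umat, sigma3, Fin.sum_univ_two, hq_even,
          map_add, _root_.map_mul, map_ofNat, Complex.conj_I, Complex.conj_conj, map_neg] <;>
        ring
    rw [show ((Complex.I * -(starRingEnd ℂ) lam) • sigma3 + Umat q t x).mulVec
          (![(starRingEnd ℂ) (φ t (-x) 1), (starRingEnd ℂ) (φ t (-x) 0)]) = _ from hvec]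
    exact hχ.deriv
  · intro t x
    have hc : ∀ i, HasDerivAt (fun s => φ s (-x) i)
        (((-((2 * Complex.I * lam ^ 2) • sigma3 + (2 * lam) • Umat q t (-x)
          + Vmat q t (-x))).mulVec (φ t (-x))) i) t :=
      hasDerivAt_pi.mp (htD t (-x))
    have h0 : HasDerivAt (fun s => (starRingEnd ℂ) (φ s (-x) 1))
        ((starRingEnd ℂ) (((-((2 * Complex.I * lam ^ 2) • sigma3 + (2 * lam) • Umat q t (-x)
          + Vmat q t (-x))).mulVec (φ t (-x))) 1)) t := (hc 1).star
    have h1 : HasDerivAt (fun s => (starRingEnd ℂ) (φ s (-x) 0))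
        ((starRingEnd ℂ) (((-((2 * Complex.I * lam ^ 2) • sigma3 + (2 * lam) • Umat q t (-x)
          + Vmat q t (-x))).mulVec (φ t (-x))) 0)) t := (hc 0).star
    have hχ : HasDerivAt
        (fun s => (![(starRingEnd ℂ) (φ s (-x) 1), (starRingEnd ℂ) (φ s (-x) 0)] : Fin 2 → ℂ))
        (![(starRingEnd ℂ) (((-((2 * Complex.I * lam ^ 2) • sigma3 + (2 * lam) • Umat q t (-x)
            + Vmat q t (-x))).mulVec (φ t (-x))) 1),
           (starRingEnd ℂ) (((-((2 * Complex.I * lam ^ 2) • sigma3 + (2 * lam) • Umat q t (-x)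
            + Vmat q t (-x))).mulVec (φ t (-x))) 0)]) t := by
      apply hasDerivAt_pi.mpr
      intro i
      fin_cases i
      · simpa using h0
      · simpa using h1
    have hvec : (-((2 * Complex.I * (-(starRingEnd ℂ) lam) ^ 2) • sigma3
          + (2 * -(starRingEnd ℂ) lam) • Umat q t x + Vmat q t x)).mulVec
          (![(starRingEnd ℂ) (φ t (-x) 1), (starRingEnd ℂ) (φ t (-x) 0)])
        = (![(starRingEnd ℂ) (((-((2 * Complex.I * lam ^ 2) • sigma3 + (2 * lam) • Umat q t (-x)
            + Vmat q t (-x))).mulVec (φ t (-x))) 1),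
           (starRingEnd ℂ) (((-((2 * Complex.I * lam ^ 2) • sigma3 + (2 * lam) • Umat q t (-x)
            + Vmat q t (-x))).mulVec (φ t (-x))) 0)] : Fin 2 → ℂ) := by
      funext i
      fin_cases i <;>
        simp [Matrix.mulVec, dotProduct, Umat, Vmat, sigma3, Fin.sum_univ_two, hq_even,
          hq_conj_deriv, hq_odd, map_add, _root_.map_mul, map_ofNat, Complex.conj_I, Complex.conj_conj, map_neg,
          Complex.conj_ofReal] <;>
        ring
    rw [show (-((2 * Complex.I * (-(starRingEnd ℂ) lam) ^ 2) • sigma3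
          + (2 * -(starRingEnd ℂ) lam) • Umat q t x + Vmat q t x)).mulVec
          (![(starRingEnd ℂ) (φ t (-x) 1), (starRingEnd ℂ) (φ t (-x) 0)]) = _ from hvec]
    exact hχ.deriv
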